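/- Let E be a real normed vector space, let λ ∈ (0, 1), let δ ≥ 0, let s : ℕ → E and s̄ : ℕ → E satisfy s̄ (t+1) = λ • s̄ t + (1 - λ) • s (t+1) for all t, let t₀ ∈ ℕ and s_old, s_new ∈ E with s̄ t₀ = s_old, and suppose ‖s (t₀ + l) - s_new‖ ≤ δ for all 1 ≤ l ≤ τ. Then ‖s̄ (t₀ + τ) - s_new‖ ≤ λ^τ * ‖s_old - s_new‖ + δ. -/

import Mathlib

/-- Adaptation rate: after a regime change at `t₀` from `s_old` to `s_new`, if the raw
score vectors stay within `δ` of `s_new`, the smoothed scores approach `s_new` up to a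
geometrically decaying bias plus `δ`. -/
theorem ema_adaptation_rate
    {E : Type*} [NormedAddCommGroup E] [NormedSpace ℝ E]
    (lam : ℝ) (hlam : lam ∈ Set.Ioo (0 : ℝ) 1)
    (δ : ℝ) (hδ : 0 ≤ δ)
    (s sbar : ℕ → E)
    (hrec : ∀ t, sbar (t + 1) = lam • sbar t + (1 - lam) • s (t + 1))
    (t₀ : ℕ) (s_old s_new : E) (h₀ : sbar t₀ = s_old)
    (τ : ℕ)
    (hδs : ∀ l, 1 ≤ l → l ≤ τ → ‖s (t₀ + l) - s_new‖ ≤ δ) :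
    ‖sbar (t₀ + τ) - s_new‖ ≤ lam ^ τ * ‖s_old - s_new‖ + δ := by
  obtain ⟨hl0, hl1⟩ := hlam
  induction τ with
  | zero => simpa [h₀] using hδ
  | succ n ih =>
    have ih' := ih (fun l h1 h2 => hδs l h1 (h2.trans (Nat.le_succ n)))
    have hkey : sbar (t₀ + (n + 1)) - s_new
        = lam • (sbar (t₀ + n) - s_new) + (1 - lam) • (s (t₀ + (n + 1)) - s_new) := by
      rw [show t₀ + (n + 1) = (t₀ + n) + 1 from rfl, hrec]
      module
    rw [hkey]
    calc ‖lam • (sbar (t₀ + n) - s_new) + (1 - lam) • (s (t₀ + (n + 1)) - s_new)‖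
        ≤ ‖lam • (sbar (t₀ + n) - s_new)‖ + ‖(1 - lam) • (s (t₀ + (n + 1)) - s_new)‖ :=
          norm_add_le _ _
      _ = lam * ‖sbar (t₀ + n) - s_new‖ + (1 - lam) * ‖s (t₀ + (n + 1)) - s_new‖ := by
          rw [norm_smul, norm_smul, Real.norm_eq_abs, Real.norm_eq_abs,
            abs_of_pos hl0, abs_of_pos (by linarith)]
      _ ≤ lam * (lam ^ n * ‖s_old - s_new‖ + δ) + (1 - lam) * δ := by
          gcongr
          · exact hδs (n + 1) (Nat.le_add_left 1 n) le_rfl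
      _ = lam ^ (n + 1) * ‖s_old - s_new‖ + δ := by ring
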